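/- In the one-dimensional example X₁ = Y₁ ∪ H, every surjective isometry of (X₁, d) is the restriction to X₁ of one of the following maps, for some a ∈ ℝ: either y ↦ g(a) + y on Y₁ and (g(t), t) ↦ (g(t + a), t + a) on H, where g(a) ∈ Y₁; or y ↦ g(2a) − y on Y₁ and (g(t), t) ↦ (g(2a − t), 2a − t) on H, where g(2a) ∈ Y₁. Conversely, each such map is a surjective isometry of X₁. -/

import Mathlib

/-- The distance of the Z-construction on the disjoint union `Y ⊕ (Y × ℝ)`. -/
noncomputable def zdist {Y : Type*} [MetricSpace Y] (R M : ℝ) :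
    Y ⊕ Y × ℝ → Y ⊕ Y × ℝ → ℝ
  | Sum.inl y₁, Sum.inl y₂ => dist y₁ y₂
  | Sum.inl y₁, Sum.inr q => dist y₁ q.1 + R
  | Sum.inr p, Sum.inl y₂ => dist p.1 y₂ + R
  | Sum.inr p, Sum.inr q => dist p.1 q.1 + min |p.2 - q.2| M

/-- The 2-torus `𝕋 = AddCircle 1 × AddCircle 1` with the product (max) metric. -/
abbrev T2 : Type := AddCircle (1 : ℝ) × AddCircle (1 : ℝ)

/-- The dense one-parameter subgroup `g(t) = (t mod 1, αt mod 1)` of the torus. -/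
noncomputable def torusFlow (α : ℝ) (t : ℝ) : T2 :=
  ((t : AddCircle (1 : ℝ)), ((α * t : ℝ) : AddCircle (1 : ℝ)))

/-- The space `X = 𝕋 ∪ H` where `H = {(g(t), t) : t ∈ ℝ}`, as a subset of
`Z = 𝕋 ⊕ (𝕋 × ℝ)`. -/
def torusX (α : ℝ) : Set (T2 ⊕ T2 × ℝ) :=
  {z | ∃ y : T2, z = Sum.inl y} ∪ {z | ∃ t : ℝ, z = Sum.inr (torusFlow α t, t)}

theorem memT (α : ℝ) (y : T2) : (Sum.inl y : T2 ⊕ T2 × ℝ) ∈ torusX α :=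
  Or.inl ⟨y, rfl⟩

theorem memH (α : ℝ) (t : ℝ) :
    (Sum.inr (torusFlow α t, t) : T2 ⊕ T2 × ℝ) ∈ torusX α :=
  Or.inr ⟨t, rfl⟩

/-- The one-dimensional example `X₁ = Y₁ ∪ H`, where `Y₁ = AddCircle 1 × {0}` is
the one-dimensional subtorus of `𝕋` containing the identity, as a subset of
`Z = 𝕋 ⊕ (𝕋 × ℝ)`. -/
def torusX1 (α : ℝ) : Set (T2 ⊕ T2 × ℝ) :=
  {z | ∃ y : T2, y.2 = 0 ∧ z = Sum.inl y} ∪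
    {z | ∃ t : ℝ, z = Sum.inr (torusFlow α t, t)}

theorem memT1 (α : ℝ) (y : T2) (hy : y.2 = 0) :
    (Sum.inl y : T2 ⊕ T2 × ℝ) ∈ torusX1 α :=
  Or.inl ⟨y, hy, rfl⟩

theorem memH1 (α : ℝ) (t : ℝ) :
    (Sum.inr (torusFlow α t, t) : T2 ⊕ T2 × ℝ) ∈ torusX1 α :=
  Or.inr ⟨t, rfl⟩

/-!
Points at `zdist` less than `R` lie in the same summand of `𝕋 ⊕ (𝕋 × ℝ)`, and both `Y₁` and
`H` can be traversed in arbitrarily small steps, so an isometry `φ` maps each of them into a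
single summand. `H` has diameter larger than `1 / 2`, the diameter of the torus, so it stays in
`H`, and then surjectivity forces `φ (Y₁) ⊆ Y₁`. On `H`, `φ` becomes a map `σ : ℝ → ℝ`
preserving `x ↦ ‖g x‖ + min |x| M`, a fixed multiple of `|x|` near `0`; so `σ` is an injective
local isometry, hence `t ↦ t + a` or `t ↦ 2a - t`. Finally a point of `𝕋` is determined by
its distances to the dense curve `g`, which pins down `φ` on `Y₁`.
-/

open Function Set

theorem apply_eq_of_forall_abs_sub_lt {β : Type*} {f : ℝ → β} {δ : ℝ} (hδ : 0 < δ)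
    (hf : ∀ u v, |u - v| < δ → f u = f v) (u v : ℝ) : f u = f v := by
  refine IsLocallyConstant.apply_eq_of_preconnectedSpace ?_ u v
  refine (IsLocallyConstant.iff_eventually_eq f).2 fun x => ?_
  exact Metric.eventually_nhds_iff.2 ⟨δ, hδ, fun y hy => hf y x hy⟩

section ZDist

variable {Y : Type*} [MetricSpace Y] {R M : ℝ}

theorem isLeft_eq_of_zdist_lt {z w : Y ⊕ Y × ℝ} (h : zdist R M z w < R) :
    z.isLeft = w.isLeft := by
  rcases z with y₁ | p <;> rcases w with y₂ | q <;> simp only [zdist] at h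
  · rfl
  · linarith [dist_nonneg (x := y₁) (y := q.1)]
  · linarith [dist_nonneg (x := p.1) (y := y₂)]
  · rfl

theorem zdist_sumMap (f : Y ≃ᵢ Y) (h : ℝ ≃ᵢ ℝ) (z w : Y ⊕ Y × ℝ) :
    zdist R M (Sum.map f (Prod.map f h) z) (Sum.map f (Prod.map f h) w) = zdist R M z w := by
  cases z <;> cases w <;> simp [zdist, f.dist_eq, ← Real.dist_eq, h.dist_eq]

theorem isLeft_apply_eq_of_zdist_lt {X : Set (Y ⊕ Y × ℝ)} {φ : X → X}
    (hφ : ∀ p q : X, zdist R M (φ p).1 (φ q).1 = zdist R M p.1 q.1) {F : ℝ → X} {δ : ℝ}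
    (hδ : 0 < δ) (hF : ∀ u v, |u - v| < δ → zdist R M (F u).1 (F v).1 < R) (u v : ℝ) :
    (φ (F u)).1.isLeft = (φ (F v)).1.isLeft :=
  apply_eq_of_forall_abs_sub_lt hδ
    (fun u v huv => isLeft_eq_of_zdist_lt (by rw [hφ]; exact hF u v huv)) u v

end ZDist

theorem eq_add_of_strictMono_of_locally_isometric {σ : ℝ → ℝ} (hmono : StrictMono σ) {δ : ℝ}
    (hδ : 0 < δ) (hσ : ∀ t s, |t - s| < δ → |σ t - σ s| = |t - s|) (t : ℝ) :
    σ t = t + σ 0 := by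
  have hloc (u v : ℝ) (huv : |u - v| < δ) : σ u - u = σ v - v := by
    have h := hσ u v huv
    rcases le_total u v with huv' | huv'
    · rw [abs_of_nonpos (by linarith [hmono.monotone huv']), abs_of_nonpos (by linarith)] at h
      linarith
    · rw [abs_of_nonneg (by linarith [hmono.monotone huv']), abs_of_nonneg (by linarith)] at h
      linarith
  linarith [apply_eq_of_forall_abs_sub_lt hδ hloc t 0]

theorem eq_add_or_eq_sub_of_locally_isometric {σ : ℝ → ℝ} (hinj : Injective σ) {δ : ℝ}
    (hδ : 0 < δ) (hσ : ∀ t s, |t - s| < δ → |σ t - σ s| = |t - s|) :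
    (∀ t, σ t = t + σ 0) ∨ (∀ t, σ t = σ 0 - t) := by
  have hcont : Continuous σ := Metric.continuous_iff.2 fun s ε hε =>
    ⟨min δ ε, lt_min hδ hε, fun t hts => by
      rw [Real.dist_eq] at hts ⊢
      rw [hσ t s (hts.trans_le (min_le_left _ _))]
      exact hts.trans_le (min_le_right _ _)⟩
  refine (hcont.strictMono_of_inj hinj).imp
    (eq_add_of_strictMono_of_locally_isometric · hδ hσ) fun hanti t => ?_
  have := eq_add_of_strictMono_of_locally_isometric hanti.neg hδ
    (fun t s hts => by rw [neg_sub_neg, abs_sub_comm, hσ t s hts]) t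
  linarith

theorem DenseRange.eq_of_forall_dist_eq {X ι : Type*} [MetricSpace X] {f : ι → X}
    (hf : DenseRange f) {x y : X} (h : ∀ i, dist x (f i) = dist y (f i)) : x = y := by
  have := congrFun (hf.equalizer (continuous_const.dist continuous_id)
    (continuous_const.dist continuous_id) (funext h)) y
  simpa using this

theorem torusFlow_add (α t s : ℝ) : torusFlow α (t + s) = torusFlow α t + torusFlow α s := by
  simp [torusFlow, mul_add]

theorem torusFlow_sub (α t s : ℝ) : torusFlow α (t - s) = torusFlow α t - torusFlow α s := by
  simp [torusFlow, mul_sub]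

theorem dist_torusFlow (α t s : ℝ) :
    dist (torusFlow α t) (torusFlow α s) = ‖torusFlow α (t - s)‖ := by
  rw [dist_eq_norm, torusFlow_sub]

theorem torus_dist_le_half (z w : T2) : dist z w ≤ 1 / 2 := by
  have h (x : AddCircle (1 : ℝ)) : ‖x‖ ≤ 1 / 2 := by
    simpa using AddCircle.norm_le_half_period (1 : ℝ) one_ne_zero (x := x)
  rw [dist_eq_norm, Prod.norm_def]
  exact max_le (h _) (h _)

theorem norm_torusFlow_of_abs_le {α x : ℝ} (hx : |x| ≤ 1 / (2 * (1 + |α|))) :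
    ‖torusFlow α x‖ = max 1 |α| * |x| := by
  have hcoe {y : ℝ} (hy : |y| ≤ 1 / 2) : ‖(y : AddCircle (1 : ℝ))‖ = |y| :=
    (AddCircle.norm_coe_eq_abs_iff (1 : ℝ) one_ne_zero).2 (by simpa using hy)
  have hα : 0 < 1 + |α| := by positivity
  have hx' : (1 + |α|) * |x| ≤ 1 / 2 := by
    rw [le_div_iff₀ (by positivity)] at hx
    linarith
  rw [torusFlow, Prod.norm_mk, hcoe (by nlinarith [abs_nonneg α]),
    hcoe (by rw [abs_mul]; nlinarith [abs_nonneg x]), abs_mul, max_mul_of_nonneg _ _ (abs_nonneg x),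
    one_mul]

theorem denseRange_torusFlow {α : ℝ} (hα : Irrational α) : DenseRange (torusFlow α) := by
  have hdense : DenseRange (· • (α : AddCircle (1 : ℝ)) : ℤ → AddCircle (1 : ℝ)) :=
    AddCircle.denseRange_zsmul_coe_iff.2 (by simpa using hα)
  refine Metric.denseRange_iff.2 fun z ε hε => ?_
  obtain ⟨u, hu⟩ := QuotientAddGroup.mk_surjective z.1
  obtain ⟨n, hn⟩ := Metric.denseRange_iff.1 hdense (z.2 - ((α * u : ℝ) : AddCircle (1 : ℝ))) ε hε
  refine ⟨u + n, ?_⟩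
  have h1 : ((u + n : ℝ) : AddCircle (1 : ℝ)) = z.1 := by
    rw [AddCircle.coe_add, ← hu]
    simp
  have h2 : ((α * (u + n) : ℝ) : AddCircle (1 : ℝ)) =
      ((α * u : ℝ) : AddCircle (1 : ℝ)) + n • (α : AddCircle (1 : ℝ)) := by
    rw [mul_add, AddCircle.coe_add, mul_comm α (n : ℝ), ← zsmul_eq_mul, AddCircle.coe_zsmul]
  rw [dist_sub_eq_dist_add_left, add_comm] at hn
  rw [Prod.dist_eq, torusFlow, h1, h2, dist_self]
  exact max_lt hε hn

theorem eq_of_forall_dist_torusFlow_eq {α : ℝ} (hα : Irrational α) {w y : T2}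
    (h : ∀ t, dist w (torusFlow α t) = dist y (torusFlow α t)) : w = y :=
  (denseRange_torusFlow hα).eq_of_forall_dist_eq h

theorem eq_add_of_dist_torusFlow_add_eq {α : ℝ} (hα : Irrational α) {c : ℝ} {w y : T2}
    (h : ∀ t, dist w (torusFlow α (t + c)) = dist y (torusFlow α t)) : w = torusFlow α c + y := by
  rw [← sub_eq_iff_eq_add']
  refine eq_of_forall_dist_torusFlow_eq hα fun t => ?_
  rw [← h, torusFlow_add, dist_sub_eq_dist_add_left]

theorem eq_sub_of_dist_torusFlow_sub_eq {α : ℝ} (hα : Irrational α) {c : ℝ} {w y : T2}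
    (h : ∀ t, dist w (torusFlow α (c - t)) = dist y (torusFlow α t)) : w = torusFlow α c - y := by
  rw [eq_sub_iff_add_eq, ← eq_sub_iff_add_eq']
  refine eq_of_forall_dist_torusFlow_eq hα fun t => ?_
  rw [← h, torusFlow_sub, dist_comm, ← dist_sub_left (torusFlow α c), sub_sub_cancel, dist_comm]

noncomputable def flowDist (α M x : ℝ) : ℝ := ‖torusFlow α x‖ + min |x| M

section FlowDist

variable {α M : ℝ}

theorem zdist_inr_torusFlow (R t s : ℝ) :
    zdist R M (Sum.inr (torusFlow α t, t)) (Sum.inr (torusFlow α s, s)) =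
      flowDist α M (t - s) := by
  rw [zdist, dist_torusFlow, flowDist]

theorem exists_flowDist_eq_mul_abs (hM : 0 < M) :
    ∃ K ≥ 1, ∃ δ₀ > 0, δ₀ ≤ M ∧ ∀ x, |x| ≤ δ₀ → flowDist α M x = K * |x| := by
  refine ⟨1 + max 1 |α|, by linarith [le_max_left 1 |α|], min (1 / (2 * (1 + |α|))) M,
    by positivity, min_le_right _ _, fun x hx => ?_⟩
  rw [flowDist, norm_torusFlow_of_abs_le (hx.trans (min_le_left _ _)),
    min_eq_left (hx.trans (min_le_right _ _))]
  ring

theorem eq_zero_of_flowDist_eq_zero (hM : 0 < M) {x : ℝ} (hx : flowDist α M x = 0) : x = 0 := by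
  have hmin : min |x| M = 0 := by
    rw [flowDist] at hx
    linarith [norm_nonneg (torusFlow α x), le_min (abs_nonneg x) hM.le]
  rcases min_eq_iff.1 hmin with ⟨h, -⟩ | ⟨h, -⟩
  · exact abs_eq_zero.1 h
  · exact absurd h hM.ne'

theorem exists_locally_isometric_of_flowDist_sub_eq (hM : 0 < M) {σ : ℝ → ℝ}
    (hσ : ∀ t s, flowDist α M (σ t - σ s) = flowDist α M (t - s)) :
    ∃ δ > 0, ∀ t s, |t - s| < δ → |σ t - σ s| = |t - s| := by
  obtain ⟨K, hK, δ₀, hδ₀, hδ₀M, hflow⟩ := exists_flowDist_eq_mul_abs (α := α) hM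
  have hK₀ : 0 < K := zero_lt_one.trans_le hK
  refine ⟨δ₀ / K, div_pos hδ₀ hK₀, fun t s hts => ?_⟩
  have hKts : K * |t - s| < δ₀ := by rwa [lt_div_iff₀ hK₀, mul_comm] at hts
  have hts₀ : |t - s| ≤ δ₀ := by nlinarith [abs_nonneg (t - s)]
  have hσts : flowDist α M (σ t - σ s) < δ₀ := by rwa [hσ, hflow _ hts₀]
  have hσts₀ : |σ t - σ s| ≤ δ₀ := by
    have hmin : min |σ t - σ s| M ≤ flowDist α M (σ t - σ s) :=
      le_add_of_nonneg_left (norm_nonneg _)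
    rcases min_choice |σ t - σ s| M with h | h <;> rw [h] at hmin <;> linarith
  have := hσ t s
  rw [hflow _ hσts₀, hflow _ hts₀] at this
  exact mul_left_cancel₀ hK₀.ne' this

theorem eq_add_or_eq_sub_of_flowDist_sub_eq (hM : 0 < M) {σ : ℝ → ℝ}
    (hσ : ∀ t s, flowDist α M (σ t - σ s) = flowDist α M (t - s)) :
    (∀ t, σ t = t + σ 0) ∨ (∀ t, σ t = σ 0 - t) := by
  obtain ⟨δ, hδ, hloc⟩ := exists_locally_isometric_of_flowDist_sub_eq hM hσ
  refine eq_add_or_eq_sub_of_locally_isometric (fun t s hts => ?_) hδ hloc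
  have h0 : flowDist α M 0 = 0 := by simp [flowDist, torusFlow, hM.le]
  rw [← sub_eq_zero]
  exact eq_zero_of_flowDist_eq_zero hM (by rw [← hσ, hts, sub_self, h0])

end FlowDist

section TorusX1

variable {α R M : ℝ}

theorem exists_eq_inl_of_mem_torusX1 {z : T2 ⊕ T2 × ℝ} (hz : z ∈ torusX1 α)
    (h : z.isLeft = true) : ∃ y : T2, y.2 = 0 ∧ z = Sum.inl y := by
  rcases hz with hz | ⟨t, rfl⟩
  · exact hz
  · simp at h

theorem exists_eq_inr_of_mem_torusX1 {z : T2 ⊕ T2 × ℝ} (hz : z ∈ torusX1 α)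
    (h : z.isLeft = false) : ∃ t : ℝ, z = Sum.inr (torusFlow α t, t) := by
  rcases hz with ⟨y, -, rfl⟩ | hz
  · simp at h
  · exact hz

theorem half_lt_flowDist_half (hM : 0 < M) : 1 / 2 < flowDist α M (1 / 2) := by
  have h₁ : 1 / 2 ≤ ‖torusFlow α (1 / 2)‖ := by
    have := AddCircle.norm_half_period_eq (1 : ℝ)
    rw [abs_one] at this
    exact this.symm.le.trans (le_max_left _ _)
  have h₂ : 0 < min |(1 / 2 : ℝ)| M := lt_min (by norm_num) hM
  rw [flowDist]
  linarith

theorem exists_apply_inr_eq_inr (hR : 0 < R) (hM : 0 < M) {φ : torusX1 α → torusX1 α}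
    (hφ : ∀ p q : torusX1 α, zdist R M (φ p).1 (φ q).1 = zdist R M p.1 q.1) (t : ℝ) :
    ∃ s : ℝ, (φ ⟨Sum.inr (torusFlow α t, t), memH1 α t⟩).1 = Sum.inr (torusFlow α s, s) := by
  set F : ℝ → torusX1 α := fun t => ⟨Sum.inr (torusFlow α t, t), memH1 α t⟩
  obtain ⟨K, hK, δ₀, hδ₀, -, hflow⟩ := exists_flowDist_eq_mul_abs (α := α) hM
  have hK₀ : 0 < K := zero_lt_one.trans_le hK
  have hconst : ∀ u v, (φ (F u)).1.isLeft = (φ (F v)).1.isLeft := by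
    refine isLeft_apply_eq_of_zdist_lt hφ (δ := min δ₀ (R / K)) (lt_min hδ₀ (div_pos hR hK₀))
      fun u v huv => ?_
    rw [zdist_inr_torusFlow, hflow _ (huv.le.trans (min_le_left _ _))]
    have := huv.trans_le (min_le_right _ _)
    rwa [lt_div_iff₀ hK₀, mul_comm] at this
  have hright : (φ (F t)).1.isLeft = false := by
    by_contra hleft
    rw [Bool.not_eq_false] at hleft
    obtain ⟨w, -, hw⟩ := exists_eq_inl_of_mem_torusX1 (φ (F (1 / 2))).2 (hconst _ t ▸ hleft)
    obtain ⟨w₀, -, hw₀⟩ := exists_eq_inl_of_mem_torusX1 (φ (F 0)).2 (hconst _ t ▸ hleft)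
    have h : dist w w₀ = flowDist α M (1 / 2) := by
      rw [← sub_zero (1 / 2 : ℝ), ← zdist_inr_torusFlow R, ← hφ (F (1 / 2)) (F 0), hw, hw₀]
      rfl
    linarith [torus_dist_le_half w w₀, half_lt_flowDist_half (α := α) hM]
  exact exists_eq_inr_of_mem_torusX1 (φ (F t)).2 hright

theorem exists_apply_inl_eq_inl (hR : 0 < R) {φ : torusX1 α → torusX1 α}
    (hsurj : Surjective φ)
    (hφ : ∀ p q : torusX1 α, zdist R M (φ p).1 (φ q).1 = zdist R M p.1 q.1)
    (hH : ∀ t : ℝ, ∃ s : ℝ,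
      (φ ⟨Sum.inr (torusFlow α t, t), memH1 α t⟩).1 = Sum.inr (torusFlow α s, s))
    (y : T2) (hy : y.2 = 0) :
    ∃ w : T2, w.2 = 0 ∧ (φ ⟨Sum.inl y, memT1 α y hy⟩).1 = Sum.inl w := by
  set F : ℝ → torusX1 α := fun u => ⟨Sum.inl ((u : AddCircle (1 : ℝ)), 0), memT1 α _ rfl⟩
  have hF : ∀ (y : T2) (hy : y.2 = 0), ∃ u, (⟨Sum.inl y, memT1 α y hy⟩ : torusX1 α) = F u := by
    intro y hy
    obtain ⟨u, hu⟩ := QuotientAddGroup.mk_surjective y.1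
    exact ⟨u, Subtype.ext (congrArg Sum.inl (Prod.ext hu.symm hy))⟩
  have hconst : ∀ u v, (φ (F u)).1.isLeft = (φ (F v)).1.isLeft := by
    refine isLeft_apply_eq_of_zdist_lt hφ hR fun u v huv => ?_
    show dist (((u : AddCircle (1 : ℝ)), 0) : T2) ((v : AddCircle (1 : ℝ)), 0) < R
    rw [Prod.dist_eq, dist_self, dist_eq_norm, ← AddCircle.coe_sub]
    exact max_lt (QuotientAddGroup.norm_mk_le_norm.trans_lt huv) hR
  obtain ⟨z, hz⟩ := hsurj (F 0)
  obtain ⟨y₀, hy₀, hzy₀⟩ := exists_eq_inl_of_mem_torusX1 z.2 (by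
    rcases z with ⟨_, ⟨y₀, hy₀, rfl⟩ | ⟨t, rfl⟩⟩
    · rfl
    · obtain ⟨s, hs⟩ := hH t
      rw [hz] at hs
      cases hs)
  obtain ⟨u₀, hu₀⟩ := hF y₀ hy₀
  have hleft : (φ (F u₀)).1.isLeft = true := by
    rw [← hu₀, ← (Subtype.ext hzy₀ : z = ⟨Sum.inl y₀, memT1 α y₀ hy₀⟩), hz]
    rfl
  obtain ⟨u, hu⟩ := hF y hy
  rw [hu]
  exact exists_eq_inl_of_mem_torusX1 (φ (F u)).2 (hconst u u₀ ▸ hleft)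

end TorusX1

section Classification

variable {α R M : ℝ}

theorem torusX1_isometry_eq_translation_or_reflection (hα : Irrational α) (hR : 0 < R)
    (hM : 0 < M) {φ : torusX1 α → torusX1 α} (hsurj : Surjective φ)
    (hφ : ∀ p q : torusX1 α, zdist R M (φ p).1 (φ q).1 = zdist R M p.1 q.1) :
    ∃ a : ℝ,
      ((torusFlow α a).2 = 0 ∧
        (∀ (y : T2) (hy : y.2 = 0),
          (φ ⟨Sum.inl y, memT1 α y hy⟩).1 = Sum.inl (torusFlow α a + y)) ∧
        (∀ t : ℝ, (φ ⟨Sum.inr (torusFlow α t, t), memH1 α t⟩).1 =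
            Sum.inr (torusFlow α (t + a), t + a))) ∨
      ((torusFlow α (2 * a)).2 = 0 ∧
        (∀ (y : T2) (hy : y.2 = 0),
          (φ ⟨Sum.inl y, memT1 α y hy⟩).1 = Sum.inl (torusFlow α (2 * a) - y)) ∧
        (∀ t : ℝ, (φ ⟨Sum.inr (torusFlow α t, t), memH1 α t⟩).1 =
            Sum.inr (torusFlow α (2 * a - t), 2 * a - t))) := by
  choose σ hσ using exists_apply_inr_eq_inr hR hM hφ
  choose ψ hψY hψ using exists_apply_inl_eq_inl hR hsurj hφ (exists_apply_inr_eq_inr hR hM hφ)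
  have hσdist (t s : ℝ) : flowDist α M (σ t - σ s) = flowDist α M (t - s) := by
    have := hφ ⟨_, memH1 α t⟩ ⟨_, memH1 α s⟩
    rwa [hσ, hσ, zdist_inr_torusFlow, zdist_inr_torusFlow] at this
  have hcross (y : T2) (hy : y.2 = 0) (t : ℝ) :
      dist (ψ y hy) (torusFlow α (σ t)) = dist y (torusFlow α t) := by
    have := hφ ⟨_, memT1 α y hy⟩ ⟨_, memH1 α t⟩
    rw [hψ y hy, hσ] at this
    exact add_right_cancel this
  rcases eq_add_or_eq_sub_of_flowDist_sub_eq hM hσdist with hσ' | hσ'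
  · have hψ' (y : T2) (hy : y.2 = 0) : ψ y hy = torusFlow α (σ 0) + y :=
      eq_add_of_dist_torusFlow_add_eq hα fun t => by rw [← hσ', hcross]
    refine ⟨σ 0, Or.inl ⟨?_, fun y hy => by rw [hψ y hy, hψ'], fun t => by rw [hσ, hσ']⟩⟩
    simpa [hψ'] using hψY 0 rfl
  · have hψ' (y : T2) (hy : y.2 = 0) : ψ y hy = torusFlow α (σ 0) - y :=
      eq_sub_of_dist_torusFlow_sub_eq hα fun t => by rw [← hσ', hcross]
    refine ⟨σ 0 / 2, Or.inr ?_⟩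
    rw [mul_div_cancel₀ _ two_ne_zero]
    exact ⟨by simpa [hψ'] using hψY 0 rfl, fun y hy => by rw [hψ y hy, hψ'],
      fun t => by rw [hσ, hσ']⟩

theorem exists_isometry_torusX1_of_isometryEquiv (f : T2 ≃ᵢ T2) (h : ℝ ≃ᵢ ℝ)
    (hfh : ∀ t, f (torusFlow α t) = torusFlow α (h t)) (hf : ∀ y, (f y).2 = 0 ↔ y.2 = 0) :
    ∃ φ : torusX1 α → torusX1 α, Surjective φ ∧
      (∀ p q : torusX1 α, zdist R M (φ p).1 (φ q).1 = zdist R M p.1 q.1) ∧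
      (∀ (y : T2) (hy : y.2 = 0), (φ ⟨Sum.inl y, memT1 α y hy⟩).1 = Sum.inl (f y)) ∧
      (∀ t : ℝ, (φ ⟨Sum.inr (torusFlow α t, t), memH1 α t⟩).1 =
        Sum.inr (torusFlow α (h t), h t)) := by
  set Φ := Sum.map f (Prod.map f h)
  have hmaps : MapsTo Φ (torusX1 α) (torusX1 α) := by
    rintro _ (⟨y, hy, rfl⟩ | ⟨t, rfl⟩)
    · exact memT1 α (f y) ((hf y).2 hy)
    · simpa [Φ, hfh] using memH1 α (h t)
  refine ⟨hmaps.restrict, hmaps.restrict_surjective_iff.2 ?_,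
    fun p q => zdist_sumMap f h p.1 q.1, fun y hy => rfl, fun t => by simp [Φ, hfh]⟩
  rintro _ (⟨y, hy, rfl⟩ | ⟨s, rfl⟩)
  · exact ⟨Sum.inl (f.symm y), memT1 α _ ((hf _).1 (by simpa using hy)), by simp [Φ]⟩
  · exact ⟨Sum.inr (torusFlow α (h.symm s), h.symm s), memH1 α _, by simp [Φ, hfh]⟩

end Classification

/-- every surjective isometry of the one-dimensional example
`X₁ = Y₁ ∪ H` is, for some `a ∈ ℝ`, either the restriction of the translation
`y ↦ g(a) + y`, `(g(t), t) ↦ (g(t+a), t+a)` with `g(a) ∈ Y₁`, or the restriction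
of the reflection `y ↦ g(2a) - y`, `(g(t), t) ↦ (g(2a-t), 2a-t)` with
`g(2a) ∈ Y₁`; and conversely each such map is a surjective isometry of `X₁`. -/
theorem torusX1_isometry_classification (α : ℝ) (hα : Irrational α)
    (R M : ℝ) (hM : 0 < M) (hRM : M ≤ 2 * R) :
    -- every surjective isometry of `X₁` has one of the two forms:
    (∀ φ : torusX1 α → torusX1 α, Function.Surjective φ →
      (∀ p q : torusX1 α, zdist R M (φ p).1 (φ q).1 = zdist R M p.1 q.1) →
      ∃ a : ℝ,
        ((torusFlow α a).2 = 0 ∧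
          (∀ (y : T2) (hy : y.2 = 0),
            (φ ⟨Sum.inl y, memT1 α y hy⟩).1 = Sum.inl (torusFlow α a + y)) ∧
          (∀ t : ℝ, (φ ⟨Sum.inr (torusFlow α t, t), memH1 α t⟩).1 =
              Sum.inr (torusFlow α (t + a), t + a))) ∨
        ((torusFlow α (2 * a)).2 = 0 ∧
          (∀ (y : T2) (hy : y.2 = 0),
            (φ ⟨Sum.inl y, memT1 α y hy⟩).1 = Sum.inl (torusFlow α (2 * a) - y)) ∧
          (∀ t : ℝ, (φ ⟨Sum.inr (torusFlow α t, t), memH1 α t⟩).1 =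
              Sum.inr (torusFlow α (2 * a - t), 2 * a - t)))) ∧
    -- conversely, each translation with `g(a) ∈ Y₁` is a surjective isometry:
    (∀ a : ℝ, (torusFlow α a).2 = 0 →
      ∃ φ : torusX1 α → torusX1 α, Function.Surjective φ ∧
        (∀ p q : torusX1 α, zdist R M (φ p).1 (φ q).1 = zdist R M p.1 q.1) ∧
        (∀ (y : T2) (hy : y.2 = 0),
          (φ ⟨Sum.inl y, memT1 α y hy⟩).1 = Sum.inl (torusFlow α a + y)) ∧
        (∀ t : ℝ, (φ ⟨Sum.inr (torusFlow α t, t), memH1 α t⟩).1 =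
            Sum.inr (torusFlow α (t + a), t + a))) ∧
    -- and each reflection with `g(2a) ∈ Y₁` is a surjective isometry:
    (∀ a : ℝ, (torusFlow α (2 * a)).2 = 0 →
      ∃ φ : torusX1 α → torusX1 α, Function.Surjective φ ∧
        (∀ p q : torusX1 α, zdist R M (φ p).1 (φ q).1 = zdist R M p.1 q.1) ∧
        (∀ (y : T2) (hy : y.2 = 0),
          (φ ⟨Sum.inl y, memT1 α y hy⟩).1 = Sum.inl (torusFlow α (2 * a) - y)) ∧
        (∀ t : ℝ, (φ ⟨Sum.inr (torusFlow α t, t), memH1 α t⟩).1 =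
            Sum.inr (torusFlow α (2 * a - t), 2 * a - t))) := by
  have hR : 0 < R := by linarith
  refine ⟨fun φ hsurj hφ => torusX1_isometry_eq_translation_or_reflection hα hR hM hsurj hφ,
    fun a ha => ?_, fun a ha => ?_⟩
  · exact exists_isometry_torusX1_of_isometryEquiv (IsometryEquiv.addLeft (torusFlow α a))
      (IsometryEquiv.addRight a) (fun t => by simp [torusFlow_add, add_comm])
      (fun y => by simp [ha])
  · exact exists_isometry_torusX1_of_isometryEquiv (IsometryEquiv.subLeft (torusFlow α (2 * a)))
      (IsometryEquiv.subLeft (2 * a)) (fun t => by simp [torusFlow_sub])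
      (fun y => by simp [ha])
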